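/- arXiv:2408.09475 — 3 statements merged into one kernel-verified Lean document; each statement's English description precedes it below -/
import Mathlib

section
/- Under the same setup (V of dimension 2m with orthonormal basis {e_α, Je_α}, σ the anti-complex-linear part of a linear map u), for any unit vector ν ∈ V one has |σ(ν)|² ≤ |σ|²/2; equivalently, the tensor S_σ := (|σ|²/2)⟨·,·⟩ − σ⊙σ, where (σ⊙σ)(X,Y) = ⟨σ(X), σ(Y)⟩, satisfies S_σ(ν, ν) ≥ 0 for every unit vector ν. -/
/-!
Pair the orthonormal basis as `{e_α, J e_α}` and set `w_α = σ(e_α)`. Anti-linearity gives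
`σ(J e_α) = -J' w_α`, so `|σ|² = 2 Σ |w_α|²`, and for `ν = Σ (a_α e_α + c_α J e_α)` we get
`σ(ν) = Σ (a_α w_α - c_α J' w_α)`. Since `J'` is an isometry with `w ⊥ J' w`, each summand has
norm `√(a_α² + c_α²) |w_α|`; the triangle and Cauchy–Schwarz inequalities then bound `|σ(ν)|²` by
`(Σ (a_α² + c_α²)) Σ |w_α|² = |ν|² |σ|² / 2`.
-/

open scoped RealInnerProductSpace

theorem norm_sum_sq_le_of_norm_sq_le {ι E : Type*} [SeminormedAddCommGroup E] (s : Finset ι)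
    (x : ι → E) {f g : ι → ℝ} (hf : ∀ i, 0 ≤ f i) (hg : ∀ i, 0 ≤ g i)
    (h : ∀ i, ‖x i‖ ^ 2 ≤ f i * g i) :
    ‖∑ i ∈ s, x i‖ ^ 2 ≤ (∑ i ∈ s, f i) * ∑ i ∈ s, g i := by
  have hx : ∀ i, ‖x i‖ ≤ √(f i) * √(g i) := fun i => by
    rw [← Real.sqrt_mul (hf i)]
    exact Real.le_sqrt_of_sq_le (h i)
  have hsum : ‖∑ i ∈ s, x i‖ ≤ √(∑ i ∈ s, f i) * √(∑ i ∈ s, g i) :=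
    calc ‖∑ i ∈ s, x i‖ ≤ ∑ i ∈ s, ‖x i‖ := norm_sum_le _ _
      _ ≤ ∑ i ∈ s, √(f i) * √(g i) := Finset.sum_le_sum fun i _ => hx i
      _ ≤ √(∑ i ∈ s, f i) * √(∑ i ∈ s, g i) := Real.sum_sqrt_mul_sqrt_le s hf hg
  calc ‖∑ i ∈ s, x i‖ ^ 2 ≤ (√(∑ i ∈ s, f i) * √(∑ i ∈ s, g i)) ^ 2 :=
        pow_le_pow_left₀ (norm_nonneg _) hsum 2
    _ = (∑ i ∈ s, f i) * ∑ i ∈ s, g i := by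
        rw [mul_pow, Real.sq_sqrt (Finset.sum_nonneg fun i _ => hf i),
          Real.sq_sqrt (Finset.sum_nonneg fun i _ => hg i)]

section ComplexStructure

variable {W : Type*} [NormedAddCommGroup W] [InnerProductSpace ℝ W] {J : W →ₗ[ℝ] W}

theorem inner_self_complexStructure_eq_zero (hJ : ∀ w, J (J w) = -w)
    (hJinner : ∀ x y, ⟪J x, J y⟫ = ⟪x, y⟫) (w : W) : ⟪w, J w⟫ = 0 := by
  have h := hJinner w (J w)
  rw [hJ, inner_neg_right, real_inner_comm] at h
  linarith

theorem norm_smul_sub_smul_complexStructure_sq (hJ : ∀ w, J (J w) = -w)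
    (hJinner : ∀ x y, ⟪J x, J y⟫ = ⟪x, y⟫) (a c : ℝ) (w : W) :
    ‖a • w - c • J w‖ ^ 2 = (a ^ 2 + c ^ 2) * ‖w‖ ^ 2 := by
  have hJnorm : ‖J w‖ = ‖w‖ := (J.isometryOfInner hJinner).norm_map w
  rw [norm_sub_sq_real, norm_smul, norm_smul, real_inner_smul_left, real_inner_smul_right,
    inner_self_complexStructure_eq_zero hJ hJinner, hJnorm, Real.norm_eq_abs, Real.norm_eq_abs,
    mul_pow, mul_pow, sq_abs, sq_abs]
  ring

end ComplexStructure

noncomputable def antilinearPart {V W : Type*} [AddCommGroup V] [Module ℝ V] [AddCommGroup W] [Module ℝ W]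
    (J : V →ₗ[ℝ] V) (J' : W →ₗ[ℝ] W) (u : V →ₗ[ℝ] W) : V →ₗ[ℝ] W :=
  (2 : ℝ)⁻¹ • (u + J' ∘ₗ u ∘ₗ J)

theorem antilinearPart_apply_complexStructure {V W : Type*} [AddCommGroup V] [Module ℝ V]
    [AddCommGroup W] [Module ℝ W] {J : V →ₗ[ℝ] V} {J' : W →ₗ[ℝ] W} (hJ : ∀ x, J (J x) = -x)
    (hJ' : ∀ w, J' (J' w) = -w) (u : V →ₗ[ℝ] W) (x : V) :
    antilinearPart J J' u (J x) = -J' (antilinearPart J J' u x) := by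
  simp only [antilinearPart, LinearMap.smul_apply, LinearMap.add_apply, LinearMap.comp_apply,
    hJ, map_neg, map_add, map_smul, hJ']
  module

theorem norm_sq_le_of_anticommute {ι V W : Type*} [Fintype ι]
    [NormedAddCommGroup V] [InnerProductSpace ℝ V] [NormedAddCommGroup W] [InnerProductSpace ℝ W]
    {J : V →ₗ[ℝ] V} {J' : W →ₗ[ℝ] W} (hJ' : ∀ w, J' (J' w) = -w)
    (hJ'inner : ∀ x y, ⟪J' x, J' y⟫ = ⟪x, y⟫) {T : V →ₗ[ℝ] W} (hT : ∀ x, T (J x) = -J' (T x))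
    (b : OrthonormalBasis (ι ⊕ ι) ℝ V) (hbJ : ∀ α, b (Sum.inr α) = J (b (Sum.inl α))) (ν : V) :
    ‖T ν‖ ^ 2 ≤ ‖ν‖ ^ 2 * ((∑ A, ‖T (b A)‖ ^ 2) / 2) := by
  set w : ι → W := fun α => T (b (Sum.inl α))
  have hTν : T ν = ∑ α, (⟪b (Sum.inl α), ν⟫ • w α - ⟪b (Sum.inr α), ν⟫ • J' (w α)) := by
    conv_lhs => rw [← b.sum_repr' ν, map_sum, Fintype.sum_sum_type]
    simp only [map_smul, hbJ, hT, smul_neg, ← Finset.sum_add_distrib, sub_eq_add_neg, w]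
  have hcoeff : ∑ α, (⟪b (Sum.inl α), ν⟫ ^ 2 + ⟪b (Sum.inr α), ν⟫ ^ 2) = ‖ν‖ ^ 2 := by
    rw [← b.sum_sq_inner_right, Fintype.sum_sum_type, Finset.sum_add_distrib]
  have hJ'norm : ∀ w, ‖J' w‖ = ‖w‖ := (J'.isometryOfInner hJ'inner).norm_map
  have hHS : (∑ A, ‖T (b A)‖ ^ 2) / 2 = ∑ α, ‖w α‖ ^ 2 := by
    simp only [Fintype.sum_sum_type, hbJ, hT, norm_neg, hJ'norm, w]
    ring
  rw [hTν, ← hcoeff, hHS]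
  exact norm_sum_sq_le_of_norm_sq_le _ _ (fun _ => by positivity) (fun _ => by positivity)
    fun α => (norm_smul_sub_smul_complexStructure_sq hJ' hJ'inner _ _ _).le

theorem stmt_6_general {V W : Type*} [NormedAddCommGroup V] [InnerProductSpace ℝ V]
    [NormedAddCommGroup W] [InnerProductSpace ℝ W] (m : ℕ)
    (J : V →ₗ[ℝ] V) (hJ : ∀ x, J (J x) = -x)
    (J' : W →ₗ[ℝ] W) (hJ' : ∀ w, J' (J' w) = -w)
    (hJ'inv : ∀ x y, (inner ℝ (J' x) (J' y) : ℝ) = inner ℝ x y)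
    (u : V →ₗ[ℝ] W) (σ : V → W)
    (hσ : ∀ X, σ X = (2:ℝ)⁻¹ • (u X + J' (u (J X))))
    (b : OrthonormalBasis (Fin m ⊕ Fin m) ℝ V)
    (hbJ : ∀ α : Fin m, b (Sum.inr α) = J (b (Sum.inl α))) :
    ∀ ν : V, ‖ν‖ = 1 →
      ‖σ ν‖ ^ 2 ≤ (∑ A : Fin m ⊕ Fin m, ‖σ (b A)‖ ^ 2) / 2 ∧
      0 ≤ (∑ A : Fin m ⊕ Fin m, ‖σ (b A)‖ ^ 2) / 2 * (inner ℝ ν ν : ℝ)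
            - (inner ℝ (σ ν) (σ ν) : ℝ) := by
  have hσ_eq : σ = antilinearPart J J' u := funext fun X => by
    simp [hσ, antilinearPart]
  intro ν hν
  have key := norm_sq_le_of_anticommute hJ' hJ'inv
    (antilinearPart_apply_complexStructure hJ hJ' u) b hbJ ν
  rw [← hσ_eq, hν, one_pow, one_mul] at key
  rw [real_inner_self_eq_norm_sq, real_inner_self_eq_norm_sq, hν, one_pow, mul_one]
  exact ⟨key, sub_nonneg.mpr key⟩

theorem stmt_6 {V W : Type*} [NormedAddCommGroup V] [InnerProductSpace ℝ V]
    [NormedAddCommGroup W] [InnerProductSpace ℝ W] (m : ℕ)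
    (J : V →ₗ[ℝ] V) (hJ : ∀ x, J (J x) = -x)
    (hJinv : ∀ x y, (inner ℝ (J x) (J y) : ℝ) = inner ℝ x y)
    (J' : W →ₗ[ℝ] W) (hJ' : ∀ w, J' (J' w) = -w)
    (hJ'inv : ∀ x y, (inner ℝ (J' x) (J' y) : ℝ) = inner ℝ x y)
    (u : V →ₗ[ℝ] W) (σ : V → W)
    (hσ : ∀ X, σ X = (2:ℝ)⁻¹ • (u X + J' (u (J X))))
    (b : OrthonormalBasis (Fin m ⊕ Fin m) ℝ V)
    (hbJ : ∀ α : Fin m, b (Sum.inr α) = J (b (Sum.inl α))) :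
    ∀ ν : V, ‖ν‖ = 1 →
      ‖σ ν‖ ^ 2 ≤ (∑ A : Fin m ⊕ Fin m, ‖σ (b A)‖ ^ 2) / 2 ∧
      0 ≤ (∑ A : Fin m ⊕ Fin m, ‖σ (b A)‖ ^ 2) / 2 * (inner ℝ ν ν : ℝ)
            - (inner ℝ (σ ν) (σ ν) : ℝ) :=
  stmt_6_general m J hJ J' hJ' hJ'inv u σ hσ b hbJ
end

section
/- Let V be a 2m-dimensional real inner product space with orthogonal complex structure J, let σ : V → W be a linear map into an inner product space W satisfying |σ(JX)| = |σ(X)| for all X, and let H be a symmetric bilinear form on V with eigenvalues λ_1 ≤ ⋯ ≤ λ_{2m}. Define S_σ = (|σ|²/2) g − σ⊙σ where g is the inner product and (σ⊙σ)(X,Y) = ⟨σ(X),σ(Y)⟩. Then ⟨S_σ, H⟩ ≥ (1/2)|σ|² Σ_{α=1}^{m-1}(λ_α + λ_{m+α}); in particular, if |σ|² = 2e then ⟨S_σ, H⟩ ≥ e·Σ_{α=1}^{m-1}(λ_α + λ_{m+α}). -/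
/-!
In an orthonormal basis `e_α, J e_α` diagonalising `H`, the pairing is
`⟨S_σ, H⟩ = ∑_α (S - s_α) μ_α` with `s_α = |σ e_α|² = |σ(J e_α)|²`, `S = ∑ s_α = |σ|²/2` and
`μ_α = λ_α + λ_{m+α}`. As `μ` is monotone, `∑ s_α μ_α ≤ S μ_m`, which leaves `S ∑_{α<m} μ_α`.
-/

open Finset

section TracePairing

variable {ι V W : Type*} [Fintype ι]
  [NormedAddCommGroup V] [InnerProductSpace ℝ V] [NormedAddCommGroup W] [InnerProductSpace ℝ W]

theorem sum_sum_inner_sub_inner_mul_eq_of_diagonal [DecidableEq ι] {v : ι → V}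
    (hv : ∀ i, ‖v i‖ = 1) (u : ι → W) (h : ι → ι → ℝ) (lam : ι → ℝ)
    (hdiag : ∀ i j, h i j = if i = j then lam i else 0) (c : ℝ) :
    ∑ i, ∑ j, (c * (inner ℝ (v i) (v j) : ℝ) - (inner ℝ (u i) (u j) : ℝ)) * h i j
      = ∑ i, (c - ‖u i‖ ^ 2) * lam i := by
  refine sum_congr rfl fun i _ => ?_
  rw [sum_eq_single i (fun j _ hji => by simp [hdiag, Ne.symm hji]) (by simp)]
  simp [hdiag, hv i]

end TracePairing

theorem sum_sum_type_eq_two_mul_of_symm {ι : Type*} [Fintype ι] {t : ι ⊕ ι → ℝ}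
    (ht : ∀ α, t (Sum.inr α) = t (Sum.inl α)) : ∑ A, t A = 2 * ∑ α, t (Sum.inl α) := by
  simp only [Fintype.sum_sum_type, ht, two_mul]

theorem sum_sum_type_half_sub_mul_eq {ι : Type*} [Fintype ι] {t : ι ⊕ ι → ℝ}
    (ht : ∀ α, t (Sum.inr α) = t (Sum.inl α)) (lam : ι ⊕ ι → ℝ) :
    ∑ A, ((∑ B, t B) / 2 - t A) * lam A
      = ∑ α, ((∑ β, t (Sum.inl β)) - t (Sum.inl α)) * (lam (Sum.inl α) + lam (Sum.inr α)) := by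
  rw [sum_sum_type_eq_two_mul_of_symm ht, Fintype.sum_sum_type, ← sum_add_distrib]
  simp only [ht]
  exact sum_congr rfl fun α _ => by ring

theorem sum_mul_sum_erase_le_sum_sub_mul {ι : Type*} [Fintype ι] [DecidableEq ι]
    {s : ι → ℝ} (hs : ∀ i, 0 ≤ s i) (μ : ι → ℝ) {a : ι} (ha : ∀ i, μ i ≤ μ a) :
    (∑ i, s i) * ∑ i ∈ univ.erase a, μ i ≤ ∑ i, ((∑ j, s j) - s i) * μ i := by
  have hweighted : ∑ i, s i * μ i ≤ (∑ i, s i) * μ a := by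
    rw [sum_mul]
    exact sum_le_sum fun i _ => mul_le_mul_of_nonneg_left (ha i) (hs i)
  have hsplit : ∑ i ∈ univ.erase a, μ i = ∑ i, μ i - μ a := by
    rw [← sum_erase_add _ _ (mem_univ a)]; ring
  simp only [sub_mul, sum_sub_distrib, ← mul_sum, hsplit]
  linarith

theorem stmt_7_general {V W : Type*} [NormedAddCommGroup V] [InnerProductSpace ℝ V]
    [NormedAddCommGroup W] [InnerProductSpace ℝ W] (m : ℕ) (hm : 2 ≤ m)
    (J : V →ₗ[ℝ] V)
    (σ : V →ₗ[ℝ] W) (hσJ : ∀ X, ‖σ (J X)‖ = ‖σ X‖)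
    (b : OrthonormalBasis (Fin m ⊕ Fin m) ℝ V)
    (hbJ : ∀ α : Fin m, b (Sum.inr α) = J (b (Sum.inl α)))
    (H : V →ₗ[ℝ] V →ₗ[ℝ] ℝ)
    (lam : Fin m ⊕ Fin m → ℝ)
    (hdiag : ∀ i j, H (b i) (b j) = if i = j then lam i else 0)
    (hmono₁ : ∀ α β : Fin m, α ≤ β → lam (Sum.inl α) ≤ lam (Sum.inl β))
    (hmono₂ : ∀ α β : Fin m, α ≤ β → lam (Sum.inr α) ≤ lam (Sum.inr β)) :
    (1 / 2) * (∑ A : Fin m ⊕ Fin m, ‖σ (b A)‖ ^ 2) *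
        (∑ α ∈ Finset.univ.filter (fun α : Fin m => (α : ℕ) < m - 1),
          (lam (Sum.inl α) + lam (Sum.inr α)))
      ≤ ∑ i : Fin m ⊕ Fin m, ∑ j : Fin m ⊕ Fin m,
          ((∑ A : Fin m ⊕ Fin m, ‖σ (b A)‖ ^ 2) / 2 * (inner ℝ (b i) (b j) : ℝ)
            - (inner ℝ (σ (b i)) (σ (b j)) : ℝ)) * H (b i) (b j) := by
  classical
  have hJnorm : ∀ α, ‖σ (b (Sum.inr α))‖ ^ 2 = ‖σ (b (Sum.inl α))‖ ^ 2 := by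
    simp [hbJ, hσJ]
  let last : Fin m := ⟨m - 1, by omega⟩
  have hlast : univ.filter (fun α : Fin m => (α : ℕ) < m - 1) = univ.erase last := by
    ext α
    simp only [mem_filter, mem_univ, true_and, mem_erase, ne_eq, Fin.ext_iff, and_true, last]
    omega
  rw [sum_sum_inner_sub_inner_mul_eq_of_diagonal b.orthonormal.1 _ _ lam hdiag,
    sum_sum_type_half_sub_mul_eq hJnorm, hlast,
    sum_sum_type_eq_two_mul_of_symm hJnorm, one_div, ← mul_assoc,
    inv_mul_cancel₀ two_ne_zero, one_mul]
  refine sum_mul_sum_erase_le_sum_sub_mul (fun _ => sq_nonneg _) _ fun α => ?_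
  have hα : α ≤ last := Fin.mk_le_mk.mpr (by omega)
  exact add_le_add (hmono₁ α last hα) (hmono₂ α last hα)

theorem stmt_7 {V W : Type*} [NormedAddCommGroup V] [InnerProductSpace ℝ V]
    [NormedAddCommGroup W] [InnerProductSpace ℝ W] (m : ℕ) (hm : 2 ≤ m)
    (J : V →ₗ[ℝ] V) (hJ : ∀ x, J (J x) = -x)
    (hJinv : ∀ x y, (inner ℝ (J x) (J y) : ℝ) = inner ℝ x y)
    (σ : V →ₗ[ℝ] W) (hσJ : ∀ X, ‖σ (J X)‖ = ‖σ X‖)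
    (b : OrthonormalBasis (Fin m ⊕ Fin m) ℝ V)
    (hbJ : ∀ α : Fin m, b (Sum.inr α) = J (b (Sum.inl α)))
    (H : V →ₗ[ℝ] V →ₗ[ℝ] ℝ) (hHsymm : ∀ x y, H x y = H y x)
    (lam : Fin m ⊕ Fin m → ℝ)
    (hdiag : ∀ i j, H (b i) (b j) = if i = j then lam i else 0)
    (hmono₁ : ∀ α β : Fin m, α ≤ β → lam (Sum.inl α) ≤ lam (Sum.inl β))
    (hmono₂ : ∀ α β : Fin m, α ≤ β → lam (Sum.inr α) ≤ lam (Sum.inr β))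
    (hmono₃ : ∀ α β : Fin m, lam (Sum.inl α) ≤ lam (Sum.inr β)) :
    (1 / 2) * (∑ A : Fin m ⊕ Fin m, ‖σ (b A)‖ ^ 2) *
        (∑ α ∈ Finset.univ.filter (fun α : Fin m => (α : ℕ) < m - 1),
          (lam (Sum.inl α) + lam (Sum.inr α)))
      ≤ ∑ i : Fin m ⊕ Fin m, ∑ j : Fin m ⊕ Fin m,
          ((∑ A : Fin m ⊕ Fin m, ‖σ (b A)‖ ^ 2) / 2 * (inner ℝ (b i) (b j) : ℝ)
            - (inner ℝ (σ (b i)) (σ (b j)) : ℝ)) * H (b i) (b j) :=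
  stmt_7_general m hm J σ hσJ b hbJ H lam hdiag hmono₁ hmono₂
end

section
/- Let f : (0,∞) → ℝ be a nondecreasing convex C² function and h : (0,∞) → (0,∞). Suppose at some point the symmetric bilinear form H on a 2m-dimensional inner product space satisfies H ≥ f'(r)·h(r)·g + (f''(r) − f'(r)h(r))·(dr ⊗ dr) for a unit covector dr, and let λ_1 ≤ ⋯ ≤ λ_{2m} be the eigenvalues of H. Then Σ_{α=1}^{m-1}(λ_α + λ_{m+α}) ≥ f''(r) + (2m−3) f'(r) h(r) when f'(r)h(r) ≥ f''(r), and Σ_{α=1}^{m-1}(λ_α + λ_{m+α}) ≥ 2(m−1) f'(r) h(r) when f'(r)h(r) < f''(r). -/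
/-! Testing each basis vector `b i` against the lower bound for `H` gives
`λ_i ≥ a + c ⟪v, b i⟫²` with `a = f'(r) h(r)` and `c = f''(r) - a`. The weights `⟪v, b i⟫²` are
nonnegative and sum to `‖v‖² = 1` (Parseval), so summing over the `2(m - 1)` paired indices
gives at least `2(m - 1) a + c T` for some `T ∈ [0, 1]`, which is at least
`2(m - 1) a + min c 0`. -/

open Finset

open scoped RealInnerProductSpace

lemma sum_range_pred_pair_le_sum_range_two_mul {w : ℕ → ℝ} (hw : ∀ n, 0 ≤ w n) (m : ℕ) :
    ∑ α ∈ range (m - 1), (w α + w (m + α)) ≤ ∑ n ∈ range (2 * m), w n := by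
  rw [two_mul, sum_range_add, ← sum_add_distrib]
  exact sum_le_sum_of_subset_of_nonneg (range_subset_range.2 (m.sub_le 1))
    fun α _ _ => add_nonneg (hw _) (hw _)

lemma le_sum_range_pair_of_add_mul_le {m : ℕ} {a c : ℝ} {w lam : ℕ → ℝ} (hw0 : ∀ n, 0 ≤ w n)
    (hw1 : ∑ n ∈ range (2 * m), w n ≤ 1) (hlam : ∀ n < 2 * m, a + c * w n ≤ lam n) :
    (m - 1 : ℕ) * (2 * a) + min c 0 ≤ ∑ α ∈ range (m - 1), (lam α + lam (m + α)) := by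
  set T := ∑ α ∈ range (m - 1), (w α + w (m + α))
  have hT0 : 0 ≤ T := sum_nonneg fun α _ => add_nonneg (hw0 _) (hw0 _)
  have hT1 : T ≤ 1 := (sum_range_pred_pair_le_sum_range_two_mul hw0 m).trans hw1
  have hcT : min c 0 ≤ c * T := by
    rcases le_total c 0 with hc | hc
    · rw [min_eq_left hc]; nlinarith
    · rw [min_eq_right hc]; positivity
  calc (m - 1 : ℕ) * (2 * a) + min c 0
      ≤ ∑ α ∈ range (m - 1), (2 * a + c * (w α + w (m + α))) := by
        rw [sum_add_distrib, sum_const, card_range, nsmul_eq_mul, ← mul_sum]; linarith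
    _ ≤ ∑ α ∈ range (m - 1), (lam α + lam (m + α)) := sum_le_sum fun α hα => by
        have := mem_range.1 hα
        linarith [hlam α (by omega), hlam (m + α) (by omega)]

theorem stmt_10_general {V : Type*} [NormedAddCommGroup V] [InnerProductSpace ℝ V]
    (m : ℕ) (hm : 2 ≤ m)
    (f' f'' h : ℝ → ℝ)
    (r : ℝ)
    (v : V) (hv : ‖v‖ = 1)
    (H : V →ₗ[ℝ] V →ₗ[ℝ] ℝ)
    (hH : ∀ X, f' r * h r * ‖X‖ ^ 2 + (f'' r - f' r * h r) * (inner ℝ v X : ℝ) ^ 2 ≤ H X X)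
    (b : OrthonormalBasis (Fin (2 * m)) ℝ V)
    (lam : ℕ → ℝ)
    (hdiag : ∀ i j : Fin (2 * m), H (b i) (b j) = if i = j then lam i else 0) :
    (f'' r ≤ f' r * h r →
      f'' r + (2 * (m : ℝ) - 3) * f' r * h r
        ≤ ∑ α ∈ Finset.range (m - 1), (lam α + lam (m + α))) ∧
    (f' r * h r < f'' r →
      2 * ((m : ℝ) - 1) * f' r * h r
        ≤ ∑ α ∈ Finset.range (m - 1), (lam α + lam (m + α))) := by
  let w : ℕ → ℝ := fun n => if hn : n < 2 * m then ⟪v, b ⟨n, hn⟩⟫ ^ 2 else 0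
  have hw0 : ∀ n, 0 ≤ w n := fun n => by dsimp only [w]; split <;> positivity
  have hw1 : ∑ n ∈ range (2 * m), w n ≤ 1 := by
    rw [← Fin.sum_univ_eq_sum_range]
    simp [w, b.sum_sq_inner_left, hv]
  have hlam : ∀ n < 2 * m, f' r * h r + (f'' r - f' r * h r) * w n ≤ lam n := fun n hn => by
    simpa [w, hn, b.orthonormal.1, hdiag] using hH (b ⟨n, hn⟩)
  have hsum := le_sum_range_pair_of_add_mul_le hw0 hw1 hlam
  rw [Nat.cast_sub (by omega : 1 ≤ m), Nat.cast_one] at hsum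
  constructor
  · intro hc
    rw [min_eq_left (by linarith)] at hsum
    linarith
  · intro hc
    rw [min_eq_right (by linarith)] at hsum
    linarith

theorem stmt_10 {V : Type*} [NormedAddCommGroup V] [InnerProductSpace ℝ V]
    (m : ℕ) (hm : 2 ≤ m)
    (f f' f'' h : ℝ → ℝ)
    (hf' : ∀ x > (0:ℝ), HasDerivAt f (f' x) x)
    (hf'' : ∀ x > (0:ℝ), HasDerivAt f' (f'' x) x)
    (hfmono : MonotoneOn f (Set.Ioi 0))
    (hfconv : ConvexOn ℝ (Set.Ioi 0) f)
    (hh : ∀ x > (0:ℝ), 0 < h x)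
    (r : ℝ) (hr : 0 < r)
    (v : V) (hv : ‖v‖ = 1)
    (H : V →ₗ[ℝ] V →ₗ[ℝ] ℝ) (hHsymm : ∀ x y, H x y = H y x)
    (hH : ∀ X, f' r * h r * ‖X‖ ^ 2 + (f'' r - f' r * h r) * (inner ℝ v X : ℝ) ^ 2 ≤ H X X)
    (b : OrthonormalBasis (Fin (2 * m)) ℝ V)
    (lam : ℕ → ℝ)
    (hdiag : ∀ i j : Fin (2 * m), H (b i) (b j) = if i = j then lam i else 0)
    (hlam : ∀ i j, i ≤ j → j < 2 * m → lam i ≤ lam j) :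
    (f'' r ≤ f' r * h r →
      f'' r + (2 * (m : ℝ) - 3) * f' r * h r
        ≤ ∑ α ∈ Finset.range (m - 1), (lam α + lam (m + α))) ∧
    (f' r * h r < f'' r →
      2 * ((m : ℝ) - 1) * f' r * h r
        ≤ ∑ α ∈ Finset.range (m - 1), (lam α + lam (m + α))) :=
  stmt_10_general m hm f' f'' h r v hv H hH b lam hdiag
end
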